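/- arXiv:1409.2320 — 5 statements merged into one kernel-verified Lean document; each statement's English description precedes it below -/
import Mathlib

section
/- Under the abstract stratification setting and Structural Hypotheses (i) and (ii): for every δ ∈ (0,1) and r₀ > 0 the lowest singular stratum S^0_{r₀, δ} is a countable set. -/
open Metric MeasureTheory Set Filter

noncomputable section

/-- `core Ω s` is the set `Ω^s := {x ∈ Ω : dist(x, ∂Ω) ≥ 2s}`. -/
def core {n : ℕ} (Ω : Set (EuclideanSpace ℝ (Fin n))) (s : ℝ) :
    Set (EuclideanSpace ℝ (Fin n)) :=
  {x ∈ Ω | 2 * s ≤ infDist x (frontier Ω)}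

/-- The abstract stratification setting: a bounded open set `Ω ⊆ ℝⁿ`, a monotone family of
bounded nonnegative density functions `Θ_s` on `Ω^s`, and monotone control functions
`d_0 ≤ d_1 ≤ ⋯ ≤ d_m` on `U = {(x,s) : x ∈ Ω^s, Θ_0(x) > 0}`. -/
structure StratSetting (n : ℕ) where
  npos : 0 < n
  Ω : Set (EuclideanSpace ℝ (Fin n))
  isOpen : IsOpen Ω
  isBounded : Bornology.IsBounded Ω
  /-- the family of density functions -/
  Θ : ℝ → EuclideanSpace ℝ (Fin n) → ℝ
  /-- the number of control functions -/
  m : ℕ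
  mpos : 0 < m
  mle : m ≤ n
  /-- the control (distance) functions -/
  d : ℕ → EuclideanSpace ℝ (Fin n) → ℝ → ℝ
  Θ_nonneg : ∀ s x, 0 ≤ s → x ∈ core Ω s → 0 ≤ Θ s x
  Θ_mono : ∀ s s' x, 0 ≤ s → s < s' → x ∈ core Ω s' → Θ s x ≤ Θ s' x
  Θ_bdd : ∀ s₀ > 0, ∃ Λ > 0, ∀ s x, 0 ≤ s → s ≤ s₀ → x ∈ core Ω s₀ → Θ s x ≤ Λ
  d_nonneg : ∀ k x s, x ∈ core Ω s → 0 < Θ 0 x → 0 ≤ d k x s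
  d_mono : ∀ k x s, k < m → x ∈ core Ω s → 0 < Θ 0 x → d k x s ≤ d (k + 1) x s

namespace StratSetting

variable {n : ℕ} (S : StratSetting n)

/-- The set `U := {(x,s) : x ∈ Ω^s, Θ_0(x) > 0}`. -/
def U : Set (EuclideanSpace ℝ (Fin n) × ℝ) :=
  {p | p.1 ∈ core S.Ω p.2 ∧ 0 < S.Θ 0 p.1}

/-- Structural Hypothesis (i): quantitative differentiation. -/
def HypI : Prop :=
  ∀ s₀ > 0, ∀ ε₁ > 0, ∃ lam eta : ℝ,
    0 < lam ∧ lam < 1 / 4 ∧ 0 < eta ∧ eta < 1 / 4 ∧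
    ∀ x s, (x, s) ∈ S.U → x ∈ core S.Ω s₀ → s < s₀ →
      S.Θ s x - S.Θ (lam * s) x ≤ eta → S.d 0 x s ≤ ε₁

/-- Structural Hypothesis (ii): consistency of the control functions. -/
def HypII : Prop :=
  ∀ s₀ > 0, ∀ ε₂ ∈ Ioo (0 : ℝ) 1, ∀ τ ∈ Ioo (0 : ℝ) 1, ∃ eta : ℝ,
    0 < eta ∧ eta ≤ ε₂ ∧
    ∀ x s k, (x, 5 * s) ∈ S.U → x ∈ core S.Ω s₀ → 5 * s < s₀ → k < S.m →
      S.d k x (4 * s) ≤ eta → ε₂ ≤ S.d (k + 1) x (4 * s) →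
      ∃ V : Submodule ℝ (EuclideanSpace ℝ (Fin n)), Module.finrank ℝ V = k ∧
        ∀ y ∈ ball x s \ thickening (τ * s) ((x + ·) '' (V : Set (EuclideanSpace ℝ (Fin n)))),
          eta < S.d 0 y (4 * s)

/-- The singular stratum `S^k_{r, r₀, δ}`. -/
def strat (k : ℕ) (r r₀ δ : ℝ) : Set (EuclideanSpace ℝ (Fin n)) :=
  {x ∈ core S.Ω r₀ | 0 < S.Θ 0 x ∧ ∀ s, r ≤ s → s ≤ r₀ → δ ≤ S.d (k + 1) x s}

/-- The singular stratum `S^k_{r₀, δ} := ⋂_{0 < r ≤ r₀} S^k_{r, r₀, δ}`. -/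
def stratInt (k : ℕ) (r₀ δ : ℝ) : Set (EuclideanSpace ℝ (Fin n)) :=
  ⋂ r ∈ Ioc (0 : ℝ) r₀, S.strat k r r₀ δ

/-- The singular stratum `S^k_{r₀} := ⋃_{0 < δ < 1} S^k_{r₀, δ}`. -/
def stratFull (k : ℕ) (r₀ : ℝ) : Set (EuclideanSpace ℝ (Fin n)) :=
  ⋃ δ ∈ Ioo (0 : ℝ) 1, S.stratInt k r₀ δ

end StratSetting

/-- A uniformly separated set in a separable metric space is countable. -/
lemma countable_of_uniformly_separated {α : Type*} [MetricSpace α]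
    [TopologicalSpace.SeparableSpace α] {A : Set α} {c : ℝ} (hc : 0 < c)
    (h : ∀ x ∈ A, ∀ y ∈ A, x ≠ y → c ≤ dist x y) : A.Countable := by
  have hd : A.PairwiseDisjoint (fun x => ball x (c / 2)) := by
    intro x hx y hy hxy
    exact ball_disjoint_ball (by linarith [h x hx y hy hxy])
  exact hd.countable_of_isOpen (fun x _ => isOpen_ball)
    (fun x _ => ⟨x, mem_ball_self (by linarith)⟩)

lemma core_anti {n : ℕ} {Ω : Set (EuclideanSpace ℝ (Fin n))} {s s' : ℝ}
    (hss' : s ≤ s') {x : EuclideanSpace ℝ (Fin n)} (hx : x ∈ core Ω s') :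
    x ∈ core Ω s :=
  ⟨hx.1, le_trans (by linarith [hx.2]) hx.2⟩

lemma stratInt_mem {n : ℕ} {S : StratSetting n} {r₀ δ : ℝ} (hr₀ : 0 < r₀)
    {x : EuclideanSpace ℝ (Fin n)} (hx : x ∈ S.stratInt 0 r₀ δ) :
    x ∈ core S.Ω r₀ ∧ 0 < S.Θ 0 x ∧ ∀ s, 0 < s → s ≤ r₀ → δ ≤ S.d 1 x s := by
  have h₀ := Set.mem_iInter₂.mp hx r₀ ⟨hr₀, le_refl _⟩
  refine ⟨h₀.1, h₀.2.1, fun s hs hsr => ?_⟩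
  have h₁ := Set.mem_iInter₂.mp hx s ⟨hs, hsr⟩
  exact h₁.2.2 s (le_refl _) hsr

/-- Theorem (countability of the lowest singular stratum): under the Structural Hypotheses,
for every `δ ∈ (0,1)` and `r₀ > 0` the stratum `S^0_{r₀,δ}` is countable. -/
theorem abstract_lowest_stratum_countable {n : ℕ} (S : StratSetting n)
    (hI : S.HypI) (hII : S.HypII)
    (δ : ℝ) (hδ : δ ∈ Ioo (0 : ℝ) 1) (r₀ : ℝ) (hr₀ : 0 < r₀) :
    (S.stratInt 0 r₀ δ).Countable := by
  obtain ⟨eta, heta0, hetaδ, hii⟩ :=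
    hII r₀ hr₀ δ hδ (1/2) ⟨by norm_num, by norm_num⟩
  obtain ⟨lam, eta1, hlam0, hlam14, heta10, heta114, hi⟩ := hI r₀ hr₀ eta heta0
  -- decomposition into pieces with uniformly good small scales
  set A : ℕ → Set (EuclideanSpace ℝ (Fin n)) := fun q =>
    {x ∈ S.stratInt 0 r₀ δ |
      ∀ t, 0 < t → t ≤ r₀ / (q + 1) → S.Θ t x - S.Θ (lam * t) x ≤ eta1} with hA
  have hcover : S.stratInt 0 r₀ δ ⊆ ⋃ q, A q := by
    intro x hx
    obtain ⟨hxcore, hxΘ, hxd⟩ := stratInt_mem hr₀ hx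
    set E : Set ℝ := (fun t => S.Θ t x) '' Ioc 0 r₀ with hE
    have hEne : E.Nonempty := ⟨S.Θ r₀ x, ⟨r₀, ⟨hr₀, le_refl _⟩, rfl⟩⟩
    have hEbdd : BddBelow E := by
      refine ⟨0, fun v hv => ?_⟩
      obtain ⟨t, ht, rfl⟩ := hv
      exact S.Θ_nonneg t x ht.1.le (core_anti ht.2 hxcore)
    obtain ⟨v, hvE, hvlt⟩ := Real.lt_sInf_add_pos hEne heta10
    obtain ⟨T, hT, rfl⟩ := hvE
    obtain ⟨q, hq⟩ := exists_nat_gt (r₀ / T)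
    refine Set.mem_iUnion.mpr ⟨q, hx, fun t ht htq => ?_⟩
    have hTr : r₀ / (q + 1) < T := by
      rw [div_lt_iff₀ (by positivity)]
      have h1 : r₀ / T < (q : ℝ) + 1 := lt_trans hq (by norm_num)
      calc r₀ = (r₀ / T) * T := (div_mul_cancel₀ r₀ (ne_of_gt hT.1)).symm
        _ < ((q : ℝ) + 1) * T := mul_lt_mul_of_pos_right h1 hT.1
        _ = T * ((q : ℝ) + 1) := mul_comm _ _
    have htT : t < T := lt_of_le_of_lt htq hTr
    have h1 : S.Θ t x ≤ S.Θ T x :=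
      S.Θ_mono t T x ht.le htT (core_anti hT.2 hxcore)
    have h2 : sInf E ≤ S.Θ (lam * t) x := by
      apply csInf_le hEbdd
      exact ⟨lam * t, ⟨by positivity,
        le_trans (le_trans (by nlinarith) htT.le) hT.2⟩, rfl⟩
    linarith
  refine Set.Countable.mono hcover (Set.countable_iUnion fun q => ?_)
  -- each piece is uniformly separated
  have hq1 : (0 : ℝ) < (q : ℝ) + 1 := by positivity
  apply countable_of_uniformly_separated (c := r₀ / (8 * ((q : ℝ) + 1)))
    (by positivity)
  intro x hx y hy hxy
  by_contra hlt
  push_neg at hlt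
  set ρ := dist x y with hρ
  have hρ0 : 0 < ρ := dist_pos.mpr hxy
  obtain ⟨hxS, hxgood⟩ := hx
  obtain ⟨hyS, hygood⟩ := hy
  obtain ⟨hxcore, hxΘ, hxd⟩ := stratInt_mem hr₀ hxS
  obtain ⟨hycore, hyΘ, hyd⟩ := stratInt_mem hr₀ hyS
  set s := (3 / 2) * ρ with hs
  have hs0 : 0 < s := by positivity
  have h8 : ρ * (8 * ((q : ℝ) + 1)) < r₀ := (lt_div_iff₀ (by positivity)).mp hlt
  have hqnn : (0 : ℝ) ≤ (q : ℝ) := Nat.cast_nonneg q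
  have h6ρ : 4 * s ≤ r₀ / (q + 1) := by
    rw [le_div_iff₀ hq1, hs]
    nlinarith
  have h4sr : 4 * s ≤ r₀ := by rw [hs]; nlinarith
  have h5sr : 5 * s < r₀ := by rw [hs]; nlinarith
  -- d 0 x (4*s) ≤ eta via Hypothesis I and goodness of x
  have hdx : S.d 0 x (4 * s) ≤ eta := by
    apply hi x (4 * s) ⟨core_anti h4sr hxcore, hxΘ⟩ hxcore (by linarith)
    exact hxgood (4 * s) (by positivity) h6ρ
  have hdy : S.d 0 y (4 * s) ≤ eta := by
    apply hi y (4 * s) ⟨core_anti h4sr hycore, hyΘ⟩ hycore (by linarith)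
    exact hygood (4 * s) (by positivity) h6ρ
  -- δ ≤ d 1 x (4*s)
  have hd1x : δ ≤ S.d (0 + 1) x (4 * s) := hxd (4 * s) (by positivity) h4sr
  -- apply Hypothesis II
  obtain ⟨V, hV0, hVprop⟩ := hii x s 0 ⟨core_anti h5sr.le hxcore, hxΘ⟩
    hxcore h5sr S.mpos hdx hd1x
  have hVbot : V = ⊥ := Submodule.finrank_eq_zero.mp hV0
  have himg : ((x + ·) '' (V : Set (EuclideanSpace ℝ (Fin n)))) = {x} := by
    rw [hVbot]
    simp
  have hymem : y ∈ ball x s \       thickening ((1/2) * s) ((x + ·) '' (V : Set (EuclideanSpace ℝ (Fin n)))) := by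
    rw [himg, thickening_singleton]
    constructor
    · rw [mem_ball, dist_comm]
      rw [hs]; nlinarith
    · rw [mem_ball, dist_comm]
      push_neg
      rw [hs, ← hρ]; linarith
  linarith [hVprop y hymem]
end
end

section
/- Under the abstract stratification setting and Structural Hypotheses (i) and (ii): for every r₀ > 0 and every k ∈ {1, …, m − 1} the Hausdorff dimension of S^k_{r₀} is at most k, and moreover S^0_{r₀} is countable. -/
/-!
Fix `δ` and `τ`. Iterating Hypothesis (ii) gives thresholds `δ = g 0 ≥ g 1 ≥ ⋯ > 0` with
`g (i + 1)` admissible as `η₂` for `ε₂ = g i`. Since `s ↦ Θ_s(x)` is monotone,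
`Θ_s(x) - Θ_{λ s}(x) → 0` as `s → 0`, so by Hypothesis (i) each point of `S^k_{r₀,δ}` has
`d_0 ≤ g (k + 1)` at all small scales; this splits the stratum into countably many pieces with a
common such range of scales. At a point `x` of a piece and a scale `s`, the sequence
`j ↦ d_j(x, 4s)` starts below `g (k + 1)` and ends above `g 0`, so it crosses the thresholds
`g (k + 1 - j)` at some `j ≤ k`; Hypothesis (ii) at that `j` confines the piece near `x` to the
`τ s`-neighbourhood of a `j`-plane through `x`. A packing count covers such a slab by
`≲ τ^{-k}` balls of radius `4 τ s` centred in the piece, and iterating these covers shows that the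
piece is `μH[d]`-null for every `d > k` once `τ` is small. For `k = 0` the slab is a ball of
radius `τ s`, so the pieces are discrete, hence countable.
-/

open Metric MeasureTheory Set Filter

noncomputable section

open scoped ENNReal NNReal Topology
open Module

section Packing

variable {F : Type*} [NormedAddCommGroup F] [NormedSpace ℝ F] [FiniteDimensional ℝ F]

theorem card_le_of_isSeparated_of_subset_closedBall {C : Finset F} {R r : ℝ} (hr : 0 < r)
    (hR : 0 ≤ R) (hC : ↑C ⊆ closedBall (0 : F) R)
    (hsep : IsSeparated (ENNReal.ofReal r) (C : Set F)) :
    (C.card : ℝ) ≤ (1 + 2 * R / r) ^ finrank ℝ F := by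
  borelize F
  set μ : Measure F := Measure.addHaar
  set q : ℝ := 1 + 2 * R / r
  have hq : 0 < q := by positivity
  have hdisj : (C : Set F).PairwiseDisjoint fun z => ball z (r / 2) := fun a ha b hb hab =>
    ball_disjoint_ball <| by
      have : ENNReal.ofReal r < edist a b := hsep ha hb hab
      rw [edist_dist, ENNReal.ofReal_lt_ofReal_iff_of_nonneg hr.le] at this
      linarith
  have hsub : ⋃ z ∈ C, ball z (r / 2) ⊆ ball (0 : F) (q * (r / 2)) := by
    refine iUnion₂_subset fun z hz y hy => ?_
    have hz' := mem_closedBall.1 (hC hz)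
    rw [mem_ball]
    calc dist y 0 ≤ dist y z + dist z 0 := dist_triangle y z 0
      _ < r / 2 + R := by linarith [mem_ball.1 hy]
      _ = q * (r / 2) := by simp only [q]; field_simp
  have hball : 0 < μ (ball 0 (r / 2)) := measure_ball_pos μ _ (by positivity)
  have hvol : (C.card : ℝ≥0∞) * μ (ball 0 (r / 2)) ≤
      ENNReal.ofReal (q ^ finrank ℝ F) * μ (ball 0 (r / 2)) :=
    calc (C.card : ℝ≥0∞) * μ (ball 0 (r / 2)) = ∑ z ∈ C, μ (ball z (r / 2)) := by
          simp [Measure.addHaar_ball_center μ]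
      _ = μ (⋃ z ∈ C, ball z (r / 2)) :=
          (measure_biUnion_finset hdisj fun _ _ => measurableSet_ball).symm
      _ ≤ μ (ball 0 (q * (r / 2))) := measure_mono hsub
      _ = ENNReal.ofReal (q ^ finrank ℝ F) * μ (ball 0 (r / 2)) :=
          Measure.addHaar_ball_mul_of_pos μ 0 hq _
  have := (ENNReal.mul_le_mul_iff_left hball.ne' measure_ball_lt_top.ne).1 hvol
  exact_mod_cast (ENNReal.ofReal_le_ofReal_iff (by positivity)).1 (by simpa using this)

theorem exists_finset_closedBall_subset_iUnion_closedBall {R r : ℝ} (hr : 0 < r) (hR : 0 ≤ R) :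
    ∃ C : Finset F, (C.card : ℝ) ≤ (1 + 2 * R / r) ^ finrank ℝ F ∧
      closedBall (0 : F) R ⊆ ⋃ z ∈ C, closedBall z r := by
  set ε : ℝ≥0 := r.toNNReal
  set N : ℝ := (1 + 2 * R / r) ^ finrank ℝ F
  have hcard : ∀ C : Finset F, ↑C ⊆ closedBall (0 : F) R → IsSeparated ε (C : Set F) →
      (C.card : ℝ) ≤ N := fun _ hC hsep =>
    card_le_of_isSeparated_of_subset_closedBall hr hR hC hsep
  have hpack : packingNumber ε (closedBall (0 : F) R) ≤ ⌊N⌋₊ := by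
    refine iSup₂_le fun C hC => iSup_le fun hsep => ?_
    by_contra! hlt
    obtain ⟨t, htC, ht⟩ := Set.exists_subset_encard_eq (Order.add_one_le_of_lt hlt)
    have htfin : t.Finite := Set.finite_of_encard_eq_coe ht
    have := hcard htfin.toFinset (by simpa using htC.trans hC) (by simpa using hsep.subset htC)
    have hn : t.ncard = ⌊N⌋₊ + 1 := by rw [Set.ncard_def, ht]; norm_cast
    rw [← Set.ncard_eq_toFinset_card t htfin, hn] at this
    linarith [Nat.lt_floor_add_one N, (by push_cast; rfl : ((⌊N⌋₊ + 1 : ℕ) : ℝ) = ⌊N⌋₊ + 1)]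
  have htop : packingNumber ε (closedBall (0 : F) R) ≠ ⊤ := ne_top_of_le_ne_top (by simp) hpack
  have hfin : (maximalSeparatedSet ε (closedBall (0 : F) R)).Finite := by
    rw [← Set.encard_ne_top_iff, encard_maximalSeparatedSet htop]
    exact htop
  refine ⟨hfin.toFinset, hcard _ (by simpa using maximalSeparatedSet_subset)
    (by simpa using isSeparated_maximalSeparatedSet), ?_⟩
  have hcover := isCover_iff_subset_iUnion_closedBall.1 (isCover_maximalSeparatedSet htop)
  simpa [ε, Real.coe_toNNReal _ hr.le] using hcover

end Packing

section ScaledCovers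

variable {X : Type*} [MetricSpace X]

theorem exists_finset_subset_card_le_of_subset_iUnion_ball {T : Set X} {C : Finset X} {r : ℝ}
    (hT : T ⊆ ⋃ z ∈ C, ball z r) :
    ∃ D : Finset X, ↑D ⊆ T ∧ D.card ≤ C.card ∧ T ⊆ ⋃ w ∈ D, ball w (2 * r) := by
  classical
  set C' := C.filter fun z => (T ∩ ball z r).Nonempty
  have : ∀ z ∈ C', ∃ w, w ∈ T ∩ ball z r := fun z hz => (Finset.mem_filter.1 hz).2
  choose! p hp using this
  refine ⟨C'.image p, ?_, Finset.card_image_le.trans (Finset.card_filter_le _ _), ?_⟩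
  · simpa [Set.subset_def] using fun z hz => (hp z hz).1
  · intro y hy
    obtain ⟨z, hz, hyz⟩ := mem_iUnion₂.1 (hT hy)
    have hz' : z ∈ C' := Finset.mem_filter.2 ⟨hz, y, hy, hyz⟩
    refine mem_iUnion₂.2 ⟨p z, Finset.mem_image_of_mem p hz', ?_⟩
    have := (hp z hz').2
    rw [mem_ball] at hyz this ⊢
    linarith [dist_triangle_right y (p z) z]

def HasScaledCovers (A : Set X) (M : ℕ) (τ ρ : ℝ) : Prop :=
  ∀ x ∈ A, ∀ s ∈ Ioc 0 ρ, ∃ C : Finset X, ↑C ⊆ A ∧ C.card ≤ M ∧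
    A ∩ ball x s ⊆ ⋃ z ∈ C, ball z (τ * s)

theorem HasScaledCovers.exists_finset_pow {A : Set X} {M : ℕ} {τ ρ : ℝ}
    (hA : HasScaledCovers A M τ ρ) (hτ₀ : 0 < τ) (hτ₁ : τ ≤ 1) (hρ : 0 < ρ) {x : X} (hx : x ∈ A)
    (j : ℕ) : ∃ C : Finset X, ↑C ⊆ A ∧ C.card ≤ M ^ j ∧
      A ∩ ball x ρ ⊆ ⋃ z ∈ C, ball z (τ ^ j * ρ) := by
  classical
  induction j with
  | zero => exact ⟨{x}, by simpa using hx, by simp, fun y hy => by simpa using hy.2⟩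
  | succ j ih =>
    obtain ⟨C, hCA, hCcard, hCcover⟩ := ih
    have hscale : τ ^ j * ρ ∈ Ioc 0 ρ :=
      ⟨by positivity, mul_le_of_le_one_left hρ.le (pow_le_one₀ hτ₀.le hτ₁)⟩
    choose! D hDA hDcard hDcover using fun z (hz : z ∈ C) => hA z (hCA hz) _ hscale
    refine ⟨C.biUnion D, ?_, ?_, ?_⟩
    · simpa [Set.subset_def] using fun w z hz hw => hDA z hz hw
    · calc (C.biUnion D).card ≤ ∑ z ∈ C, (D z).card := Finset.card_biUnion_le
        _ ≤ ∑ _z ∈ C, M := Finset.sum_le_sum hDcard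
        _ ≤ M ^ j * M := by rw [Finset.sum_const, smul_eq_mul]; gcongr
        _ = M ^ (j + 1) := (pow_succ M j).symm
    · intro y hy
      obtain ⟨z, hz, hyz⟩ := mem_iUnion₂.1 (hCcover hy)
      obtain ⟨w, hw, hyw⟩ := mem_iUnion₂.1 (hDcover z hz ⟨hy.1, hyz⟩)
      exact mem_iUnion₂.2 ⟨w, Finset.mem_biUnion.2 ⟨z, hz, hw⟩, by rwa [pow_succ', mul_assoc]⟩

theorem sum_ediam_ball_rpow_le (C : Finset X) {r d : ℝ} (hr : 0 ≤ r) (hd : 0 ≤ d) :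
    ∑ z : C, ediam (ball (z : X) r) ^ d ≤ ENNReal.ofReal (C.card * (2 * r) ^ d) :=
  calc ∑ z : C, ediam (ball (z : X) r) ^ d
      ≤ ∑ _z : C, ENNReal.ofReal (2 * r) ^ d :=
        Finset.sum_le_sum fun z _ => ENNReal.rpow_le_rpow (ediam_le_of_forall_dist_le
          fun a ha b hb => by linarith [dist_triangle_right a b z, mem_ball.1 ha, mem_ball.1 hb]) hd
    _ = ENNReal.ofReal (C.card * (2 * r) ^ d) := by
        rw [Finset.sum_const, Finset.card_univ, Fintype.card_coe, nsmul_eq_mul,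
          ENNReal.ofReal_rpow_of_nonneg (by positivity) hd, ENNReal.ofReal_mul (by positivity),
          ENNReal.ofReal_natCast]

variable [MeasurableSpace X] [BorelSpace X]

theorem hausdorffMeasure_eq_zero_of_finset_covers {B : Set X} {d ρ τ : ℝ} {M : ℕ} (hd : 0 ≤ d)
    (hρ : 0 ≤ ρ) (hτ₀ : 0 ≤ τ) (hτ₁ : τ < 1) (hM : M * τ ^ d < 1)
    (hcov : ∀ j : ℕ, ∃ C : Finset X, C.card ≤ M ^ j ∧ B ⊆ ⋃ z ∈ C, ball z (τ ^ j * ρ)) :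
    μH[d] B = 0 := by
  choose C hCcard hCcover using hcov
  have hr : Tendsto (fun j => ENNReal.ofReal (2 * (τ ^ j * ρ))) atTop (𝓝 0) := by
    simpa using ENNReal.tendsto_ofReal
      (((tendsto_pow_atTop_nhds_zero_of_lt_one hτ₀ hτ₁).mul_const ρ).const_mul 2)
  have hμ := Measure.hausdorffMeasure_le_liminf_sum d B _ hr
    (fun j (z : C j) => ball (z : X) (τ ^ j * ρ))
    (Eventually.of_forall fun j z => ediam_le_of_forall_dist_le fun a ha b hb => by
      linarith [dist_triangle_right a b z, mem_ball.1 ha, mem_ball.1 hb])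
    (Eventually.of_forall fun j y hy => by
      obtain ⟨z, hz, hyz⟩ := mem_iUnion₂.1 (hCcover j hy)
      exact mem_iUnion.2 ⟨⟨z, hz⟩, hyz⟩)
  have hbound : ∀ j, ∑ z : C j, ediam (ball (z : X) (τ ^ j * ρ)) ^ d ≤
      ENNReal.ofReal ((2 * ρ) ^ d * (M * τ ^ d) ^ j) := fun j => by
    refine (sum_ediam_ball_rpow_le _ (by positivity) hd).trans (ENNReal.ofReal_le_ofReal ?_)
    calc ((C j).card : ℝ) * (2 * (τ ^ j * ρ)) ^ d ≤ M ^ j * (2 * (τ ^ j * ρ)) ^ d := by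
          gcongr; exact_mod_cast hCcard j
      _ = (2 * ρ) ^ d * (M * τ ^ d) ^ j := by
          rw [show 2 * (τ ^ j * ρ) = 2 * ρ * τ ^ j by ring,
            Real.mul_rpow (by positivity) (by positivity), ← Real.rpow_pow_comm hτ₀, mul_pow]
          ring
  have hlim :
      Tendsto (fun j : ℕ => ENNReal.ofReal ((2 * ρ) ^ d * (M * τ ^ d) ^ j)) atTop (𝓝 0) := by
    simpa using ENNReal.tendsto_ofReal
      ((tendsto_pow_atTop_nhds_zero_of_lt_one (by positivity) hM).const_mul ((2 * ρ) ^ d))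
  refine le_antisymm (hμ.trans ?_) bot_le
  calc liminf (fun j => ∑ z : C j, ediam (ball (z : X) (τ ^ j * ρ)) ^ d) atTop
      ≤ liminf (fun j : ℕ => ENNReal.ofReal ((2 * ρ) ^ d * (M * τ ^ d) ^ j)) atTop :=
        liminf_le_liminf (Eventually.of_forall hbound)
    _ = 0 := hlim.liminf_eq

theorem HasScaledCovers.hausdorffMeasure_eq_zero [SecondCountableTopology X] {A : Set X} {M : ℕ}
    {d τ ρ : ℝ} (hA : HasScaledCovers A M τ ρ) (hd : 0 ≤ d) (hρ : 0 < ρ) (hτ₀ : 0 < τ)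
    (hτ₁ : τ < 1) (hM : M * τ ^ d < 1) : μH[d] A = 0 :=
  measure_null_of_locally_null A fun x hx =>
    ⟨A ∩ ball x ρ, inter_mem_nhdsWithin A (ball_mem_nhds x hρ),
      hausdorffMeasure_eq_zero_of_finset_covers hd hρ.le hτ₀.le hτ₁ hM fun j =>
        let ⟨C, _, hCcard, hCcover⟩ := hA.exists_finset_pow hτ₀ hτ₁.le hρ hx j
        ⟨C, hCcard, hCcover⟩⟩

end ScaledCovers

theorem tendsto_one_add_div_pow_mul_rpow_nhdsGT_zero {k : ℕ} {d : ℝ} (hkd : k < d) (a b : ℝ)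
    (hb : 0 ≤ b) : Tendsto (fun τ => (1 + a / τ) ^ k * (b * τ) ^ d) (𝓝[>] 0) (𝓝 0) := by
  set g : ℝ → ℝ := fun τ => (τ + a) ^ k * b ^ d * τ ^ (d - k)
  have hg : ContinuousAt g 0 :=
    (((continuous_id.add continuous_const).pow k).continuousAt.mul continuousAt_const).mul
      (Real.continuousAt_rpow_const 0 _ (Or.inr (by linarith)))
  have hg0 : g 0 = 0 := by simp [g, Real.zero_rpow (by linarith : d - k ≠ 0)]
  refine (hg0 ▸ hg.tendsto.mono_left nhdsWithin_le_nhds).congr' ?_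
  filter_upwards [self_mem_nhdsWithin] with τ (hτ : 0 < τ)
  simp only [g]
  rw [Real.mul_rpow hb hτ.le, Real.rpow_sub hτ, Real.rpow_natCast, one_add_div hτ.ne', div_pow]
  field_simp

section Flatness

variable {E : Type*} [NormedAddCommGroup E] [NormedSpace ℝ E]

theorem exists_finset_subset_card_le_of_subset_thickening (V : Submodule ℝ E)
    [FiniteDimensional ℝ V] {x : E} {T : Set E} {s τ : ℝ} (hs : 0 < s) (hτ₀ : 0 < τ) (hτ₁ : τ ≤ 1)
    (hTx : T ⊆ ball x s) (hTV : T ⊆ thickening (τ * s) ((x + ·) '' (V : Set E))) :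
    ∃ D : Finset E, ↑D ⊆ T ∧ (D.card : ℝ) ≤ (1 + 4 / τ) ^ finrank ℝ V ∧
      T ⊆ ⋃ w ∈ D, ball w (4 * τ * s) := by
  classical
  obtain ⟨C, hCcard, hCcover⟩ :=
    exists_finset_closedBall_subset_iUnion_closedBall (F := V) (R := 2 * s)
      (by positivity : 0 < τ * s) (by positivity)
  have hcover : T ⊆ ⋃ z ∈ C.image (fun u : V => x + u), ball z (2 * τ * s) := by
    intro y hy
    obtain ⟨_, ⟨v, hv, rfl⟩, hyv⟩ := mem_thickening_iff.1 (hTV hy)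
    have hvR : (⟨v, hv⟩ : V) ∈ closedBall 0 (2 * s) := by
      have := dist_triangle_left (x + v) x y
      rw [dist_self_add_left] at this
      rw [mem_closedBall_zero_iff, Submodule.coe_norm]
      nlinarith [mem_ball.1 (hTx hy)]
    obtain ⟨u, hu, hvu⟩ := mem_iUnion₂.1 (hCcover hvR)
    refine mem_iUnion₂.2 ⟨x + u, Finset.mem_image_of_mem _ hu, ?_⟩
    have : dist (x + v) (x + u) ≤ τ * s := by
      rw [dist_add_left]; exact mem_closedBall.1 hvu
    rw [mem_ball]
    linarith [dist_triangle y (x + v) (x + u)]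
  obtain ⟨D, hDT, hDcard, hDcover⟩ := exists_finset_subset_card_le_of_subset_iUnion_ball hcover
  refine ⟨D, hDT, ?_, by simpa only [← mul_assoc, show (2 : ℝ) * 2 = 4 by norm_num] using hDcover⟩
  calc (D.card : ℝ) ≤ C.card := by exact_mod_cast hDcard.trans Finset.card_image_le
    _ ≤ _ := hCcard
    _ = (1 + 4 / τ) ^ finrank ℝ V := by congr 2; field_simp; ring

def IsUniformlyFlat [FiniteDimensional ℝ E] (k : ℕ) (τ : ℝ) (A : Set E) : Prop :=
  ∃ ρ > 0, ∀ x ∈ A, ∀ s ∈ Ioc 0 ρ, ∃ V : Submodule ℝ E, finrank ℝ V ≤ k ∧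
    A ∩ ball x s ⊆ thickening (τ * s) ((x + ·) '' (V : Set E))

variable [FiniteDimensional ℝ E]

def IsCountablyFlat (k : ℕ) (τ : ℝ) (s : Set E) : Prop :=
  ∃ 𝒜 : Set (Set E), 𝒜.Countable ∧ s ⊆ ⋃₀ 𝒜 ∧ ∀ A ∈ 𝒜, IsUniformlyFlat k τ A

namespace IsUniformlyFlat

variable {k : ℕ} {τ : ℝ} {A : Set E}

theorem exists_hasScaledCovers (hA : IsUniformlyFlat k τ A) (hτ₀ : 0 < τ) (hτ₁ : τ ≤ 1) :
    ∃ ρ > 0, HasScaledCovers A ⌊(1 + 4 / τ) ^ k⌋₊ (4 * τ) ρ := by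
  obtain ⟨ρ, hρ, hflat⟩ := hA
  refine ⟨ρ, hρ, fun x hx s hs => ?_⟩
  obtain ⟨V, hVk, hV⟩ := hflat x hx s hs
  obtain ⟨D, hDT, hDcard, hDcover⟩ := exists_finset_subset_card_le_of_subset_thickening V hs.1 hτ₀
    hτ₁ inter_subset_right hV
  refine ⟨D, hDT.trans inter_subset_left, Nat.le_floor (hDcard.trans ?_), hDcover⟩
  exact pow_le_pow_right₀ (le_add_of_nonneg_right (by positivity)) hVk

theorem hausdorffMeasure_eq_zero [MeasurableSpace E] [BorelSpace E] {d : ℝ}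
    (hA : IsUniformlyFlat k τ A) (hd : 0 ≤ d) (hτ₀ : 0 < τ) (hτ₁ : 4 * τ < 1)
    (hsmall : (1 + 4 / τ) ^ k * (4 * τ) ^ d < 1) : μH[d] A = 0 := by
  obtain ⟨ρ, hρ, hcov⟩ := hA.exists_hasScaledCovers hτ₀ (by linarith)
  refine hcov.hausdorffMeasure_eq_zero hd hρ (by positivity) hτ₁ (lt_of_le_of_lt ?_ hsmall)
  gcongr
  exact Nat.floor_le (by positivity)

theorem countable (hA : IsUniformlyFlat 0 τ A) (hτ₀ : 0 < τ) (hτ₁ : τ < 1) : A.Countable := by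
  obtain ⟨ρ, hρ, hflat⟩ := hA
  have hisolated : ∀ x ∈ A, A ∩ ball x ρ ⊆ {x} := by
    rintro x hx y ⟨hyA, hyx⟩
    by_contra hne
    set t := dist y x
    have ht : 0 < t := dist_pos.2 hne
    -- at a scale `s ∈ (t, t / τ]` the slab `ball x (τ s)` misses `y`
    have hts : t < min ρ (t / τ) := lt_min (mem_ball.1 hyx) ((lt_div_iff₀ hτ₀).2 (by nlinarith))
    obtain ⟨V, hV0, hV⟩ := hflat x hx (min ρ (t / τ)) ⟨ht.trans hts, min_le_left _ _⟩
    rw [Submodule.finrank_eq_zero.1 (Nat.le_zero.1 hV0), Submodule.bot_coe, image_singleton,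
      add_zero, thickening_singleton] at hV
    have hτt : τ * min ρ (t / τ) ≤ t := by
      calc τ * min ρ (t / τ) ≤ τ * (t / τ) := by gcongr; exact min_le_right _ _
        _ = t := by field_simp
    exact absurd (mem_ball.1 (hV ⟨hyA, hts⟩)) (not_lt.2 hτt)
  obtain ⟨t, htA, htc, hAt⟩ := TopologicalSpace.countable_cover_nhdsWithin
    fun x (_ : x ∈ A) => inter_mem_nhdsWithin A (ball_mem_nhds x hρ)
  refine htc.mono fun y hy => ?_
  obtain ⟨x, hxt, hyx⟩ := mem_iUnion₂.1 (hAt hy)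
  rwa [hisolated x (htA hxt) hyx]

end IsUniformlyFlat

namespace IsCountablyFlat

variable {k : ℕ} {τ : ℝ} {s t : Set E}

theorem mono (ht : IsCountablyFlat k τ t) (hst : s ⊆ t) : IsCountablyFlat k τ s :=
  let ⟨𝒜, h𝒜, ht𝒜, hflat⟩ := ht
  ⟨𝒜, h𝒜, hst.trans ht𝒜, hflat⟩

theorem iUnion {ι : Type*} [Countable ι] {s : ι → Set E} (h : ∀ i, IsCountablyFlat k τ (s i)) :
    IsCountablyFlat k τ (⋃ i, s i) := by
  choose 𝒜 h𝒜 hs hflat using h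
  refine ⟨⋃ i, 𝒜 i, countable_iUnion h𝒜, ?_, fun A hA => ?_⟩
  · rw [sUnion_iUnion]
    exact iUnion_mono hs
  · obtain ⟨i, hi⟩ := mem_iUnion.1 hA
    exact hflat i A hi

theorem countable (h : IsCountablyFlat 0 τ s) (hτ₀ : 0 < τ) (hτ₁ : τ < 1) : s.Countable :=
  let ⟨_, h𝒜, hs, hflat⟩ := h
  (h𝒜.sUnion fun A hA => (hflat A hA).countable hτ₀ hτ₁).mono hs

end IsCountablyFlat

theorem dimH_le_of_eventually_isCountablyFlat [MeasurableSpace E] [BorelSpace E] {k : ℕ}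
    {s : Set E} (h : ∀ᶠ τ in 𝓝[>] 0, IsCountablyFlat k τ s) : dimH s ≤ k := by
  refine dimH_le fun d hd => le_of_not_gt fun hkd => ?_
  have hkd' : (k : ℝ) < d := by exact_mod_cast hkd
  obtain ⟨τ, ⟨hflat, hsmall⟩, hτ⟩ := ((h.and
    ((tendsto_one_add_div_pow_mul_rpow_nhdsGT_zero hkd' 4 4 (by norm_num)).eventually
      (gt_mem_nhds one_pos))).and (Ioo_mem_nhdsGT (by norm_num : (0 : ℝ) < 1 / 4))).exists
  obtain ⟨𝒜, h𝒜, hs𝒜, hflat⟩ := hflat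
  have : μH[d] s = 0 := measure_mono_null hs𝒜 <| (measure_sUnion_null_iff h𝒜).2 fun A hA =>
    (hflat A hA).hausdorffMeasure_eq_zero d.2 hτ.1 (by linarith [hτ.2]) hsmall
  simp [this] at hd

end Flatness

theorem exists_le_and_le_succ {α : Type*} [LinearOrder α] {a b : ℕ → α} :
    ∀ {k : ℕ}, a 0 ≤ b 0 → b (k + 1) ≤ a (k + 1) → ∃ j ≤ k, a j ≤ b j ∧ b (j + 1) ≤ a (j + 1)
  | 0, h₀, h₁ => ⟨0, le_rfl, h₀, h₁⟩
  | k + 1, h₀, h₁ => by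
    rcases le_or_gt (a (k + 1)) (b (k + 1)) with h | h
    · exact ⟨k + 1, le_rfl, h, h₁⟩
    · obtain ⟨j, hj, hab⟩ := exists_le_and_le_succ h₀ h.le
      exact ⟨j, hj.trans k.le_succ, hab⟩

theorem MonotoneOn.eventually_sub_comp_mul_le {f : ℝ → ℝ} {a c η : ℝ}
    (hf : MonotoneOn f (Icc 0 a)) (ha : 0 < a) (hc : 0 < c) (hη : 0 < η) :
    ∀ᶠ σ in 𝓝[>] 0, f σ - f (c * σ) ≤ η := by
  have hbdd : BddBelow (f '' Ioo 0 a) :=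
    ⟨f 0, forall_mem_image.2 fun y hy => hf ⟨le_rfl, ha.le⟩ (Ioo_subset_Icc_self hy) hy.1.le⟩
  have hlim := (hf.mono Ioo_subset_Icc_self).tendsto_nhdsWithin_Ioo_right (nonempty_Ioo.2 ha) hbdd
  have hc' : Tendsto (c * ·) (𝓝[>] 0) (𝓝[>] 0) :=
    tendsto_nhdsWithin_of_tendsto_nhds_of_eventually_within _
      ((continuous_const_mul c).tendsto' 0 0 (mul_zero c) |>.mono_left nhdsWithin_le_nhds)
      (eventually_nhdsWithin_of_forall fun σ (hσ : 0 < σ) => mul_pos hc hσ)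
  exact (hlim.sub (hlim.comp hc')).eventually (eventually_le_nhds (by simpa using hη))

theorem core_antitone {n : ℕ} (Ω : Set (EuclideanSpace ℝ (Fin n))) : Antitone (core Ω) :=
  fun _ _ hst _ hx => ⟨hx.1, le_trans (by linarith) hx.2⟩

namespace StratSetting

variable {n : ℕ} (S : StratSetting n)

theorem monotoneOn_Θ {r₀ : ℝ} {x : EuclideanSpace ℝ (Fin n)} (hx : x ∈ core S.Ω r₀) :
    MonotoneOn (S.Θ · x) (Icc 0 r₀) := fun a ha b hb hab =>
  hab.eq_or_lt.elim (fun h => h ▸ le_rfl) fun h => S.Θ_mono a b x ha.1 h (core_antitone _ hb.2 hx)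

structure IsThresholdChain (r₀ τ : ℝ) (g : ℕ → ℝ) : Prop where
  pos : ∀ i, 0 < g i
  antitone : Antitone g
  exists_submodule : ∀ i x s j, (x, 5 * s) ∈ S.U → x ∈ core S.Ω r₀ → 5 * s < r₀ → j < S.m →
    S.d j x (4 * s) ≤ g (i + 1) → g i ≤ S.d (j + 1) x (4 * s) →
    ∃ V : Submodule ℝ (EuclideanSpace ℝ (Fin n)), finrank ℝ V = j ∧
      ∀ y ∈ ball x s \ thickening (τ * s) ((x + ·) '' (V : Set (EuclideanSpace ℝ (Fin n)))),
        g (i + 1) < S.d 0 y (4 * s)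

variable {S}

theorem HypII.exists_isThresholdChain (hII : S.HypII) {r₀ τ δ : ℝ}
    (hr₀ : 0 < r₀) (hτ : τ ∈ Ioo (0 : ℝ) 1) (hδ : δ ∈ Ioo (0 : ℝ) 1) :
    ∃ g, g 0 = δ ∧ S.IsThresholdChain r₀ τ g := by
  choose! η hη₀ hηle hη using fun ε (hε : ε ∈ Ioo (0 : ℝ) 1) => hII r₀ hr₀ ε hε τ hτ
  set g : ℕ → ℝ := fun i => η^[i] δ
  have hsucc : ∀ i, g (i + 1) = η (g i) := fun i => Function.iterate_succ_apply' η i δ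
  have hmem : ∀ i, g i ∈ Ioo (0 : ℝ) 1 := fun i => by
    induction i with
    | zero => exact hδ
    | succ i ih => exact hsucc i ▸ ⟨hη₀ _ ih, (hηle _ ih).trans_lt ih.2⟩
  refine ⟨g, rfl, fun i => (hmem i).1,
    antitone_nat_of_succ_le fun i => hsucc i ▸ hηle _ (hmem i), fun i => ?_⟩
  rw [hsucc i]
  exact hη _ (hmem i)

theorem IsThresholdChain.exists_subset_thickening {r₀ τ s : ℝ} {g : ℕ → ℝ}
    (hg : S.IsThresholdChain r₀ τ g) {k : ℕ} (hk : k < S.m) {x : EuclideanSpace ℝ (Fin n)}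
    (hx : x ∈ core S.Ω r₀) (hΘ : 0 < S.Θ 0 x) (h5s : 5 * s < r₀)
    (hx₀ : S.d 0 x (4 * s) ≤ g (k + 1)) (hxk : g 0 ≤ S.d (k + 1) x (4 * s)) :
    ∃ V : Submodule ℝ (EuclideanSpace ℝ (Fin n)), finrank ℝ V ≤ k ∧
      ball x s ∩ {y | S.d 0 y (4 * s) ≤ g (k + 1)} ⊆
        thickening (τ * s) ((x + ·) '' (V : Set (EuclideanSpace ℝ (Fin n)))) := by
  -- `j ↦ d_j(x, 4s)` starts below the increasing thresholds `g (k + 1 - j)` and ends above them.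
  obtain ⟨j, hjk, hj, hj₁⟩ := exists_le_and_le_succ (a := fun j => S.d j x (4 * s))
    (b := fun j => g (k + 1 - j)) (k := k) hx₀ (by simpa using hxk)
  obtain ⟨V, hV, hVy⟩ := hg.exists_submodule (k - j) x s j ⟨core_antitone _ h5s.le hx, hΘ⟩ hx h5s
    (by omega)
    (by simpa [show k + 1 - j = k - j + 1 by omega] using hj)
    (by simpa [show k + 1 - (j + 1) = k - j by omega] using hj₁)
  refine ⟨V, hV.trans_le hjk, fun y ⟨hys, hy⟩ => ?_⟩
  by_contra hyV
  have := hVy y ⟨hys, hyV⟩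
  linarith [hg.antitone (show k - j + 1 ≤ k + 1 by omega), hy.out]

theorem mem_stratInt {k : ℕ} {r₀ δ : ℝ} (hr₀ : 0 < r₀) {x : EuclideanSpace ℝ (Fin n)} :
    x ∈ S.stratInt k r₀ δ ↔
      x ∈ core S.Ω r₀ ∧ 0 < S.Θ 0 x ∧ ∀ σ ∈ Ioc 0 r₀, δ ≤ S.d (k + 1) x σ := by
  simp only [stratInt, strat, mem_iInter, mem_ofPred_eq]
  constructor
  · intro h
    exact ⟨(h r₀ ⟨hr₀, le_rfl⟩).1, (h r₀ ⟨hr₀, le_rfl⟩).2.1, fun σ hσ => (h σ hσ).2.2 σ le_rfl hσ.2⟩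
  · rintro ⟨hx, hΘ, hd⟩ r hr
    exact ⟨hx, hΘ, fun σ hrσ hσ => hd σ ⟨hr.1.trans_le hrσ, hσ⟩⟩

theorem stratInt_anti {k : ℕ} {r₀ δ δ' : ℝ} (h : δ' ≤ δ) :
    S.stratInt k r₀ δ ⊆ S.stratInt k r₀ δ' := by
  intro x hx
  simp only [stratInt, mem_iInter] at hx ⊢
  intro r hr
  obtain ⟨hxr, hΘ, hd⟩ := hx r hr
  exact ⟨hxr, hΘ, fun σ hrσ hσ => h.trans (hd σ hrσ hσ)⟩

theorem stratFull_subset_iUnion_stratInt (k : ℕ) (r₀ : ℝ) :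
    S.stratFull k r₀ ⊆ ⋃ j : ℕ, S.stratInt k r₀ (1 / (j + 2)) := by
  simp only [stratFull, iUnion_subset_iff]
  intro δ hδ x hx
  obtain ⟨j, hj⟩ := exists_nat_one_div_lt hδ.1
  have hj₂ : 1 / ((j : ℝ) + 2) ≤ δ :=
    (one_div_le_one_div_of_le (by positivity) (by linarith)).trans hj.le
  exact mem_iUnion.2 ⟨j, stratInt_anti hj₂ hx⟩

theorem isCountablyFlat_stratInt (hI : S.HypI) (hII : S.HypII) {r₀ τ δ : ℝ} (hr₀ : 0 < r₀)
    (hτ : τ ∈ Ioo (0 : ℝ) 1) (hδ : δ ∈ Ioo (0 : ℝ) 1) {k : ℕ} (hk : k < S.m) :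
    IsCountablyFlat k τ (S.stratInt k r₀ δ) := by
  obtain ⟨g, rfl, hg⟩ := hII.exists_isThresholdChain hr₀ hτ hδ
  obtain ⟨c, η, hc, -, hη, -, hHI⟩ := hI r₀ hr₀ (g (k + 1)) (hg.pos _)
  set A : ℕ → Set (EuclideanSpace ℝ (Fin n)) := fun i =>
    {x ∈ S.stratInt k r₀ (g 0) | ∀ σ ∈ Ioo 0 (1 / (i + 1 : ℝ)), S.Θ σ x - S.Θ (c * σ) x ≤ η}
  refine ⟨range A, countable_range A, fun x hx => ?_, ?_⟩
  · obtain ⟨ε, hε, hgood⟩ := (nhdsGT_basis 0).eventually_iff.1 <|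
      (S.monotoneOn_Θ ((mem_stratInt hr₀).1 hx).1).eventually_sub_comp_mul_le hr₀ hc hη
    obtain ⟨i, hi⟩ := exists_nat_one_div_lt hε
    exact mem_sUnion.2 ⟨A i, mem_range_self i, hx, fun σ hσ => hgood ⟨hσ.1, hσ.2.trans hi⟩⟩
  rintro _ ⟨i, rfl⟩
  refine ⟨min (1 / (i + 1) / 8) (r₀ / 8), by positivity, fun x hx s hs => ?_⟩
  have hsi : s ≤ 1 / (i + 1) / 8 := hs.2.trans (min_le_left _ _)
  have hsr : s ≤ r₀ / 8 := hs.2.trans (min_le_right _ _)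
  have h4s : 4 * s ∈ Ioo 0 (1 / (i + 1 : ℝ)) := ⟨by linarith [hs.1], by linarith [hs.1]⟩
  have hd₀ : ∀ y ∈ A i, S.d 0 y (4 * s) ≤ g (k + 1) := fun y hy => by
    obtain ⟨hyr, hΘ, -⟩ := (mem_stratInt hr₀).1 hy.1
    exact hHI y (4 * s) ⟨core_antitone _ (by linarith) hyr, hΘ⟩ hyr (by linarith) (hy.2 _ h4s)
  obtain ⟨hxr, hΘ, hdk⟩ := (mem_stratInt hr₀).1 hx.1
  obtain ⟨V, hVk, hV⟩ := hg.exists_subset_thickening hk hxr hΘ (by linarith [hs.1])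
    (hd₀ x hx) (hdk _ ⟨h4s.1, by linarith⟩)
  exact ⟨V, hVk, fun y hy => hV ⟨hy.2, hd₀ y hy.1⟩⟩

theorem isCountablyFlat_stratFull (hI : S.HypI) (hII : S.HypII) {r₀ τ : ℝ} (hr₀ : 0 < r₀)
    (hτ : τ ∈ Ioo (0 : ℝ) 1) {k : ℕ} (hk : k < S.m) : IsCountablyFlat k τ (S.stratFull k r₀) :=
  (IsCountablyFlat.iUnion fun j : ℕ => isCountablyFlat_stratInt hI hII hr₀ hτ
    ⟨by positivity, (div_lt_one (by positivity)).2 (by linarith [j.cast_nonneg (α := ℝ)])⟩ hk).mono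
    (S.stratFull_subset_iUnion_stratInt k r₀)

end StratSetting

/-- Theorem (abstract stratification): under the Structural Hypotheses, for every `r₀ > 0`
one has `dim_H(S^k_{r₀}) ≤ k` for `k ∈ {1,…,m-1}`, and `S^0_{r₀}` is countable. -/
theorem abstract_stratification {n : ℕ} (S : StratSetting n)
    (hI : S.HypI) (hII : S.HypII) (r₀ : ℝ) (hr₀ : 0 < r₀) :
    (∀ k, 1 ≤ k → k ≤ S.m - 1 → dimH (S.stratFull k r₀) ≤ (k : ENNReal)) ∧
      (S.stratFull 0 r₀).Countable := by
  refine ⟨fun k hk₁ hkm => dimH_le_of_eventually_isCountablyFlat ?_, ?_⟩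
  · filter_upwards [Ioo_mem_nhdsGT one_pos] with τ hτ
    exact S.isCountablyFlat_stratFull hI hII hr₀ hτ (by omega)
  · exact (S.isCountablyFlat_stratFull hI hII hr₀ (τ := 1 / 2) ⟨by norm_num, by norm_num⟩
      S.mpos).countable (by norm_num) (by norm_num)
end
end

section
/- White's stratification theorem, countability part: under the Structural Hypotheses (i') and (ii') of White's setting, the stratum Σ_0 is countable. -/
/-!
At a point `x` of `Σ₀` the function `f` has a strict local maximum on `Ω`. Otherwise there are
points `u j → x` of `Ω \ {x}` with `f (u j) ≥ f x`; blowing up at `x` with radii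
`r j = 2 |u j - x|` puts the rescaled points on the sphere of radius `1/2`, and (ii') together
with the upper semicontinuity of `f` yields `g ∈ 𝒢(x)` and `|y| = 1/2` with
`g y ≥ f x = g 0`. A conical function is maximal at `0` (homogeneity plus upper
semicontinuity at the vertex), so `y` lies in the spine of `g`, which is impossible when
`dim S_g = 0`. Finally, in a second-countable space the strict local maxima of a function form a
countable set, since each of them is the unique maximum of the function on some basic open set.
-/

open Metric MeasureTheory Set Filter

noncomputable section

/-- A function `g : ℝⁿ → [0,∞)` is conical if it is upper semicontinuous and, whenever
`g(z) = g(0)`, it is positively 0-homogeneous with respect to `z`. -/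
def IsConical {n : ℕ} (g : EuclideanSpace ℝ (Fin n) → ℝ) : Prop :=
  UpperSemicontinuous g ∧ (∀ x, 0 ≤ g x) ∧
    ∀ z, g z = g 0 → ∀ (x : EuclideanSpace ℝ (Fin n)) (lam : ℝ), 0 < lam →
      g (z + lam • x) = g (z + x)

/-- A class `𝒢` of conical functions is compact if every sequence in `𝒢` admits a
subsequence `(g_{i_j})` and a limit `g ∈ 𝒢` with
`limsup_j g_{i_j}(y_j) ≤ g(y)` whenever `y_j → y`. -/
def IsCompactClass {n : ℕ} (G : Set (EuclideanSpace ℝ (Fin n) → ℝ)) : Prop :=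
  ∀ g : ℕ → (EuclideanSpace ℝ (Fin n) → ℝ), (∀ i, g i ∈ G) →
    ∃ φ : ℕ → ℕ, StrictMono φ ∧ ∃ g' ∈ G,
      ∀ (y : EuclideanSpace ℝ (Fin n)) (ys : ℕ → EuclideanSpace ℝ (Fin n)),
        Tendsto ys atTop (nhds y) →
        limsup (fun j => g (φ j) (ys j)) atTop ≤ g' y

/-- The spine `S_g := {z : g(z) = g(0)}` of a conical function. -/
def spine {n : ℕ} (g : EuclideanSpace ℝ (Fin n) → ℝ) : Set (EuclideanSpace ℝ (Fin n)) :=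
  {z | g z = g 0}

/-- The dimension of the spine of `g` (for a conical `g` the spine is a linear subspace,
so we take the dimension of its span). -/
def spineDim {n : ℕ} (g : EuclideanSpace ℝ (Fin n) → ℝ) : ℕ :=
  Module.finrank ℝ (Submodule.span ℝ (spine g))

/-- The stratum `Σ_ℓ := {x ∈ Ω : f(x) > 0 and d(x) ≤ ℓ}`, where
`d(x) = sup {dim S_g : g ∈ 𝒢(x)}`. -/
def whiteStratum {n : ℕ} (Ω : Set (EuclideanSpace ℝ (Fin n)))
    (f : EuclideanSpace ℝ (Fin n) → ℝ)
    (G : EuclideanSpace ℝ (Fin n) → Set (EuclideanSpace ℝ (Fin n) → ℝ)) (ℓ : ℕ) :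
    Set (EuclideanSpace ℝ (Fin n)) :=
  {x ∈ Ω | 0 < f x ∧ ∀ g ∈ G x, spineDim g ≤ ℓ}

/-- White's Structural Hypothesis (ii'): for every `x ∈ Ω` and every sequence `r_i ↓ 0`
there are a subsequence `r_{i_j} ↓ 0` and `g ∈ 𝒢(x)` such that
`limsup_j f(x + r_{i_j} y_j) ≤ g(y)` for all `y, y_j ∈ B_1` with `y_j → y`. -/
def WhiteHypII {n : ℕ} (Ω : Set (EuclideanSpace ℝ (Fin n)))
    (f : EuclideanSpace ℝ (Fin n) → ℝ)
    (G : EuclideanSpace ℝ (Fin n) → Set (EuclideanSpace ℝ (Fin n) → ℝ)) : Prop :=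
  ∀ x ∈ Ω, ∀ r : ℕ → ℝ, (∀ i, 0 < r i) → StrictAnti r → Tendsto r atTop (nhds 0) →
    ∃ φ : ℕ → ℕ, StrictMono φ ∧ ∃ g ∈ G x,
      ∀ y ∈ ball (0 : EuclideanSpace ℝ (Fin n)) 1,
      ∀ ys : ℕ → EuclideanSpace ℝ (Fin n),
        (∀ j, ys j ∈ ball (0 : EuclideanSpace ℝ (Fin n)) 1) →
        Tendsto ys atTop (nhds y) →
        limsup (fun j => f (x + r (φ j) • ys j)) atTop ≤ g y

open Topology TopologicalSpace

def IsStrictLocalMaxOn {X β : Type*} [TopologicalSpace X] [Preorder β] (f : X → β) (s : Set X)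
    (a : X) : Prop :=
  ∀ᶠ y in 𝓝[s \ {a}] a, f y < f a

theorem countable_setOf_isStrictLocalMaxOn {X β : Type*} [TopologicalSpace X]
    [SecondCountableTopology X] [Preorder β] (f : X → β) (s : Set X) :
    {x ∈ s | IsStrictLocalMaxOn f s x}.Countable := by
  let maxima (B : Set X) : Set X := {x ∈ s ∩ B | ∀ y ∈ s ∩ B, y ≠ x → f y < f x}
  have maxima_subsingleton (B : Set X) : (maxima B).Subsingleton := by
    intro a ha b hb
    by_contra hab
    exact lt_asymm (ha.2 b hb.1 (Ne.symm hab)) (hb.2 a ha.1 hab)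
  refine ((countable_countableBasis X).biUnion fun B _ =>
    (maxima_subsingleton B).countable).mono ?_
  rintro x ⟨hxs, hmax⟩
  obtain ⟨U, hUo, hxU, hU⟩ := mem_nhdsWithin.1 hmax
  obtain ⟨B, hB, hxB, hBU⟩ := (isBasis_countableBasis X).exists_subset_of_mem_open hxU hUo
  exact Set.mem_biUnion hB ⟨⟨hxs, hxB⟩, fun y hy hyx => hU ⟨hBU hy.2, hy.1, hyx⟩⟩

theorem exists_strictAnti_subseq_of_tendsto_zero {d : ℕ → ℝ} (hpos : ∀ j, 0 < d j)
    (hd : Tendsto d atTop (𝓝 0)) : ∃ φ : ℕ → ℕ, StrictMono φ ∧ StrictAnti (d ∘ φ) := by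
  have hd' : Tendsto d atTop (𝓝[>] 0) := tendsto_nhdsWithin_iff.2 ⟨hd, .of_forall hpos⟩
  obtain ⟨φ, hφ, hinv⟩ := strictMono_subseq_of_tendsto_atTop (tendsto_inv_nhdsGT_zero.comp hd')
  exact ⟨φ, hφ, fun i j hij => (inv_lt_inv₀ (hpos _) (hpos _)).1 (hinv hij)⟩

theorem exists_seq_of_not_isStrictLocalMaxOn {X β : Type*} [MetricSpace X] [LinearOrder β]
    {f : X → β} {s : Set X} {x : X} (h : ¬IsStrictLocalMaxOn f s x) :
    ∃ u : ℕ → X, Tendsto u atTop (𝓝[s] x) ∧ (∀ j, u j ≠ x ∧ f x ≤ f (u j)) ∧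
      StrictAnti fun j => dist (u j) x := by
  have hfreq : ∃ᶠ y in 𝓝[s \ {x}] x, f x ≤ f y ∧ y ∈ s \ {x} :=
    ((Filter.not_eventually.1 h).and_eventually self_mem_nhdsWithin).mono
      fun y hy => ⟨not_lt.1 hy.1, hy.2⟩
  obtain ⟨v, hv, hvx⟩ := exists_seq_forall_of_frequently hfreq
  have hdist_pos : ∀ j, 0 < dist (v j) x := fun j => dist_pos.2 (hvx j).2.2
  have hdist : Tendsto (fun j => dist (v j) x) atTop (𝓝 0) :=
    tendsto_iff_dist_tendsto_zero.1 (hv.mono_right nhdsWithin_le_nhds)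
  obtain ⟨φ, hφ, hanti⟩ := exists_strictAnti_subseq_of_tendsto_zero hdist_pos hdist
  exact ⟨v ∘ φ, (hv.mono_right (nhdsWithin_mono _ sdiff_subset)).comp hφ.tendsto_atTop,
    fun j => ⟨(hvx (φ j)).2.2, (hvx (φ j)).1⟩, hanti⟩

section WhiteSetting

variable {n : ℕ} {Ω : Set (EuclideanSpace ℝ (Fin n))} {f : EuclideanSpace ℝ (Fin n) → ℝ}
  {G : EuclideanSpace ℝ (Fin n) → Set (EuclideanSpace ℝ (Fin n) → ℝ)}
  {g : EuclideanSpace ℝ (Fin n) → ℝ} {x : EuclideanSpace ℝ (Fin n)}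

theorem spineDim_eq_zero_iff : spineDim g = 0 ↔ spine g ⊆ {0} := by
  rw [spineDim, Submodule.finrank_eq_zero, Submodule.span_eq_bot, Set.subset_singleton_iff]

theorem IsConical.apply_le_apply_zero (hg : IsConical g) (y : EuclideanSpace ℝ (Fin n)) :
    g y ≤ g 0 := by
  by_contra! hlt
  have hsmall : Tendsto (fun t : ℝ => t • y) (𝓝[>] 0) (𝓝 0) := by
    simpa using ((tendsto_id (x := 𝓝 (0 : ℝ))).mono_left nhdsWithin_le_nhds).smul_const y
  obtain ⟨t, hgt, ht⟩ := ((hsmall.eventually (hg.1 0 (g y) hlt)).and self_mem_nhdsWithin).exists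
  have hscale : g (t • y) = g y := by simpa using hg.2.2 0 rfl y t ht
  exact hgt.ne hscale

theorem WhiteHypII.exists_limsup_le (hII : WhiteHypII Ω f G) (hx : x ∈ Ω)
    {u : ℕ → EuclideanSpace ℝ (Fin n)} (hu : Tendsto u atTop (𝓝 x)) (hux : ∀ j, u j ≠ x)
    (hanti : StrictAnti fun j => dist (u j) x) :
    ∃ g ∈ G x, ∃ y ∈ sphere (0 : EuclideanSpace ℝ (Fin n)) (1 / 2), ∃ ψ : ℕ → ℕ, StrictMono ψ ∧
      limsup (fun j => f (u (ψ j))) atTop ≤ g y := by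
  set r : ℕ → ℝ := fun j => 2 * dist (u j) x
  have hr_pos : ∀ j, 0 < r j := fun j => mul_pos two_pos (dist_pos.2 (hux j))
  have hr_anti : StrictAnti r := fun _ _ hij => mul_lt_mul_of_pos_left (hanti hij) two_pos
  have hr_tend : Tendsto r atTop (𝓝 0) := by
    simpa using (tendsto_iff_dist_tendsto_zero.1 hu).const_mul 2
  set ys : ℕ → EuclideanSpace ℝ (Fin n) := fun j => (r j)⁻¹ • (u j - x)
  have hys : ∀ j, ys j ∈ sphere (0 : EuclideanSpace ℝ (Fin n)) (1 / 2) := fun j => by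
    have := dist_pos.2 (hux j)
    rw [mem_sphere_zero_iff_norm, norm_smul, norm_inv, Real.norm_of_nonneg (hr_pos j).le,
      ← dist_eq_norm, show r j = 2 * dist (u j) x from rfl]
    field_simp
  have hrescale : ∀ j, x + r j • ys j = u j := fun j => by
    simp [ys, smul_smul, mul_inv_cancel₀ (hr_pos j).ne']
  obtain ⟨y, hy, ψ, hψ, hys_tend⟩ := (isCompact_sphere _ _).tendsto_subseq hys
  obtain ⟨φ, hφ, g, hg, hlim⟩ := hII x hx (r ∘ ψ) (fun j => hr_pos _)
    (hr_anti.comp_strictMono hψ) (hr_tend.comp hψ.tendsto_atTop)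
  have hball : sphere (0 : EuclideanSpace ℝ (Fin n)) (1 / 2) ⊆ ball 0 1 :=
    sphere_subset_ball (by norm_num)
  refine ⟨g, hg, y, hy, ψ ∘ φ, hψ.comp hφ, ?_⟩
  simpa [hrescale] using hlim y (hball hy) (ys ∘ ψ ∘ φ) (fun j => hball (hys _))
    (hys_tend.comp hφ.tendsto_atTop)

theorem isStrictLocalMaxOn_of_spine_subset_zero (hf : UpperSemicontinuousOn f Ω)
    (hII : WhiteHypII Ω f G) (hx : x ∈ Ω) (hG : ∀ g ∈ G x, IsConical g) (hI : ∀ g ∈ G x, g 0 = f x)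
    (hspine : ∀ g ∈ G x, spine g ⊆ {0}) : IsStrictLocalMaxOn f Ω x := by
  by_contra hmax
  obtain ⟨u, hu, hux, hanti⟩ := exists_seq_of_not_isStrictLocalMaxOn hmax
  obtain ⟨g, hg, y, hy, ψ, hψ, hlim⟩ :=
    hII.exists_limsup_le hx (hu.mono_right nhdsWithin_le_nhds) (fun j => (hux j).1) hanti
  have hbdd : IsBoundedUnder (· ≤ ·) atTop fun j => f (u (ψ j)) :=
    isBoundedUnder_of_eventually_le <| ((hu.comp hψ.tendsto_atTop).eventually
      (hf x hx (f x + 1) (lt_add_one _))).mono fun _ hj => hj.le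
  have hfx_le : f x ≤ g y :=
    (le_limsup_of_frequently_le (.of_forall fun j => (hux (ψ j)).2) hbdd).trans hlim
  have hy_spine : y ∈ spine g :=
    le_antisymm ((hG g hg).apply_le_apply_zero y) (hI g hg ▸ hfx_le)
  have hy_zero : y = 0 := hspine g hg hy_spine
  norm_num [hy_zero] at hy

end WhiteSetting

theorem white_stratification_countable_general {n : ℕ} (Ω : Set (EuclideanSpace ℝ (Fin n)))
    (f : EuclideanSpace ℝ (Fin n) → ℝ)
    (hf_usc : UpperSemicontinuousOn f Ω)
    (G : EuclideanSpace ℝ (Fin n) → Set (EuclideanSpace ℝ (Fin n) → ℝ))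
    (hG_conical : ∀ x ∈ Ω, ∀ g ∈ G x, IsConical g)
    (hI' : ∀ x ∈ Ω, ∀ g ∈ G x, g 0 = f x)
    (hII' : WhiteHypII Ω f G) :
    (whiteStratum Ω f G 0).Countable := by
  refine (countable_setOf_isStrictLocalMaxOn f Ω).mono ?_
  rintro x ⟨hxΩ, -, hdim⟩
  refine ⟨hxΩ, ?_⟩
  have hspine : ∀ g ∈ G x, spine g ⊆ {0} := fun g hg =>
    spineDim_eq_zero_iff.1 (Nat.le_zero.1 (hdim g hg))
  exact isStrictLocalMaxOn_of_spine_subset_zero hf_usc hII' hxΩ (hG_conical x hxΩ) (hI' x hxΩ)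
    hspine

/-- White's stratification theorem, countability part: under the Structural Hypotheses
(i') and (ii'), the stratum `Σ_0` is countable. -/
theorem white_stratification_countable {n : ℕ} (Ω : Set (EuclideanSpace ℝ (Fin n)))
    (hΩo : IsOpen Ω) (hΩb : Bornology.IsBounded Ω)
    (f : EuclideanSpace ℝ (Fin n) → ℝ)
    (hf_usc : UpperSemicontinuousOn f Ω) (hf_nonneg : ∀ x ∈ Ω, 0 ≤ f x)
    (G : EuclideanSpace ℝ (Fin n) → Set (EuclideanSpace ℝ (Fin n) → ℝ))
    (hG_conical : ∀ x ∈ Ω, ∀ g ∈ G x, IsConical g)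
    (hG_compact : ∀ x ∈ Ω, IsCompactClass (G x))
    (hI' : ∀ x ∈ Ω, ∀ g ∈ G x, g 0 = f x)
    (hII' : WhiteHypII Ω f G) :
    (whiteStratum Ω f G 0).Countable :=
  white_stratification_countable_general Ω f hf_usc G hG_conical hI' hII'
end
end

section
/- Compatibility of the two stratifications: assume the abstract stratification setting (a), (b) and White's setting with the compatibility conditions (1) f = Θ_0 on Ω and (2) for every x ∈ Ω and every k ∈ {1, …, m}, if d_k(x, r_j) → 0 for some sequence (r_j) ⊂ (0, dist(x, ∂Ω)), then x ∉ Σ_{k−1}. Then for every ℓ ∈ {0, …, m − 1}, every r₀ > 0 and every x ∈ Σ_ℓ ∩ Ω^{r₀} there exists δ > 0 such that d_{ℓ+1}(x, r) ≥ δ for all 0 < r ≤ r₀; equivalently, Σ_ℓ ∩ Ω^{r₀} ⊂ S^ℓ_{r₀}. -/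
open Metric MeasureTheory Set Filter

noncomputable section

/-- Compatibility of the two stratifications: under the abstract stratification setting
and White's setting, if (1) `f = Θ_0` on `Ω` and (2) whenever `d_k(x, r_j) → 0` along a
sequence of radii `r_j ∈ (0, dist(x, ∂Ω))` one has `x ∉ Σ_{k-1}`, then for every
`ℓ ∈ {0,…,m-1}`, `r₀ > 0` and `x ∈ Σ_ℓ ∩ Ω^{r₀}` there is `δ > 0` with
`d_{ℓ+1}(x,r) ≥ δ` for all `0 < r ≤ r₀`; equivalently `Σ_ℓ ∩ Ω^{r₀} ⊆ S^ℓ_{r₀}`. -/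
theorem white_stratum_subset_abstract_stratum {n : ℕ} (S : StratSetting n)
    (f : EuclideanSpace ℝ (Fin n) → ℝ)
    (hf_usc : UpperSemicontinuousOn f S.Ω) (hf_nonneg : ∀ x ∈ S.Ω, 0 ≤ f x)
    (G : EuclideanSpace ℝ (Fin n) → Set (EuclideanSpace ℝ (Fin n) → ℝ))
    (hG_conical : ∀ x ∈ S.Ω, ∀ g ∈ G x, IsConical g)
    (hG_compact : ∀ x ∈ S.Ω, IsCompactClass (G x))
    (hcompat₁ : ∀ x ∈ S.Ω, f x = S.Θ 0 x)
    (hcompat₂ : ∀ x ∈ S.Ω, ∀ k, 1 ≤ k → k ≤ S.m →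
      (∃ r : ℕ → ℝ, (∀ j, r j ∈ Ioo (0 : ℝ) (infDist x (frontier S.Ω))) ∧
        Tendsto (fun j => S.d k x (r j)) atTop (nhds 0)) →
      x ∉ whiteStratum S.Ω f G (k - 1)) :
    ∀ ℓ, ℓ ≤ S.m - 1 → ∀ r₀ > 0,
      (∀ x ∈ whiteStratum S.Ω f G ℓ ∩ core S.Ω r₀,
        ∃ δ > 0, ∀ r, 0 < r → r ≤ r₀ → δ ≤ S.d (ℓ + 1) x r) ∧
      whiteStratum S.Ω f G ℓ ∩ core S.Ω r₀ ⊆ S.stratFull ℓ r₀ := by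
  intro ℓ hℓ r₀ hr₀
  have key : ∀ x ∈ whiteStratum S.Ω f G ℓ ∩ core S.Ω r₀,
      ∃ δ > 0, ∀ r, 0 < r → r ≤ r₀ → δ ≤ S.d (ℓ + 1) x r := by
    rintro x ⟨hxW, hxcore⟩
    obtain ⟨hxO, hfx, hd⟩ := hxW
    have hT : 0 < S.Θ 0 x := by rw [← hcompat₁ x hxO]; exact hfx
    by_contra h
    push_neg at h
    choose r hr1 hr2 hr3 using fun j : ℕ => h (1/(j+1)) (by positivity)
    have hinf : 2 * r₀ ≤ infDist x (frontier S.Ω) := hxcore.2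
    have hcore : ∀ s, 0 < s → s ≤ r₀ → x ∈ core S.Ω s := fun s hs hs' =>
      ⟨hxO, le_trans (by linarith) hinf⟩
    have hmpos := S.mpos
    have hk := hcompat₂ x hxO (ℓ+1) (by omega) (by omega)
      ⟨r, fun j => ⟨hr1 j, lt_of_le_of_lt (hr2 j) (by linarith)⟩,
        squeeze_zero (fun j => S.d_nonneg _ _ _ (hcore _ (hr1 j) (hr2 j)) hT)
          (fun j => (hr3 j).le) tendsto_one_div_add_atTop_nhds_zero_nat⟩
    simp only [Nat.add_sub_cancel] at hk
    exact hk ⟨hxO, hfx, hd⟩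
  refine ⟨key, fun x hx => ?_⟩
  obtain ⟨δ, hδ, hdd⟩ := key x hx
  have hT : 0 < S.Θ 0 x := by rw [← hcompat₁ x hx.1.1]; exact hx.1.2.1
  refine mem_iUnion₂.mpr ⟨min δ (1/2), ⟨lt_min hδ (by norm_num),
    lt_of_le_of_lt (min_le_right _ _) (by norm_num)⟩, ?_⟩
  refine mem_iInter₂.mpr fun r hr => ⟨hx.2, hT, fun s hs1 hs2 =>
    le_trans (min_le_left _ _) (hdd s (lt_of_lt_of_le hr.1 hs1) hs2)⟩
end
end

section
/- A function that is α-homogeneous with respect to two points is invariant under their difference: let α > 0 and let w : ℝⁿ → X be a map into a real vector space X such that w(λx) = λ^α · w(x) and w(z + λx) = λ^α · w(z + x) for all x ∈ ℝⁿ and all λ > 0, where z ∈ ℝⁿ is fixed. Then w(z + y) = w(y) for every y ∈ ℝⁿ. -/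
/-- A function that is `α`-homogeneous with respect to two points is invariant under their
difference: if `w(λx) = λ^α w(x)` and `w(z + λx) = λ^α w(z + x)` for all `x` and `λ > 0`,
then `w(z + y) = w(y)` for every `y`. -/
theorem homogeneous_two_points_invariant {n : ℕ} {X : Type*}
    [AddCommGroup X] [Module ℝ X] (α : ℝ) (hα : 0 < α)
    (w : EuclideanSpace ℝ (Fin n) → X) (z : EuclideanSpace ℝ (Fin n))
    (hhom₀ : ∀ (x : EuclideanSpace ℝ (Fin n)) (lam : ℝ), 0 < lam →
      w (lam • x) = lam ^ α • w x)
    (hhomz : ∀ (x : EuclideanSpace ℝ (Fin n)) (lam : ℝ), 0 < lam →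
      w (z + lam • x) = lam ^ α • w (z + x)) :
    ∀ y, w (z + y) = w y := by
  intro y
  have h2 : (0:ℝ) < 2 := two_pos
  have hz := hhomz ((2:ℝ)⁻¹ • (y - z)) 2 h2
  have h0 := hhom₀ ((2:ℝ)⁻¹ • (z + y)) 2 h2
  have e1 : z + (2:ℝ) • ((2:ℝ)⁻¹ • (y - z)) = y := by
    rw [smul_inv_smul₀ (by norm_num : (2:ℝ) ≠ 0)]; abel
  have e2 : (2:ℝ) • ((2:ℝ)⁻¹ • (z + y)) = z + y := by
    rw [smul_inv_smul₀ (by norm_num : (2:ℝ) ≠ 0)]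
  have e3 : z + (2:ℝ)⁻¹ • (y - z) = (2:ℝ)⁻¹ • (z + y) := by
    rw [smul_sub, smul_add]
    have : z = (2:ℝ)⁻¹ • z + (2:ℝ)⁻¹ • z := by
      rw [← add_smul]; norm_num
    nth_rewrite 1 [this]
    abel
  rw [e1, e3] at hz
  rw [e2] at h0
  rw [h0, ← hz]
end
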